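/- Let μ, ν be probability measures on X, X₁,…,Xₙ i.i.d. with law μ, and T = T(X₁,…,Xₙ) an unbiased estimator with values in R^q, with covariance matrix Var(T). If E_{μ^⊗n}[T] = ψ(μ) and E_{ν^⊗n}[T] = ψ(ν), then the matrix inequality Var(T) ≥ (ψ(μ) - ψ(ν))(ψ(μ) - ψ(ν))ᵗ / ((d(μ,ν) + 1)^n - 1) holds in the sense of positive semi-definiteness (assuming 0 < d(μ,ν) < ∞). -/

import Mathlib

/-!
Chapman–Robbins. Let `L x = ∏ i, (dν/dμ)(x i)` be the likelihood ratio of `ν^⊗n` with respect to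
`μ^⊗n`. For a scalar statistic `g`, `E_{ν^⊗n} g - E_{μ^⊗n} g = E_{μ^⊗n}[L g] - E_{μ^⊗n} g` is the
covariance of `L` and `g` under `μ^⊗n` (because `E L = 1`), so by Cauchy–Schwarz its square is at
most `Var g · Var L`. Since `L` is a product of independent factors,
`E L² = (E (dν/dμ)²)^n = (d + 1)^n`, i.e. `Var L = (d + 1)^n - 1`. Applied to `g = αᵗT` for every
`α`, this says `αᵗ Var(T) α ≥ (αᵗ(ψ(μ) - ψ(ν)))² / ((d + 1)^n - 1)`, which is the matrix inequality.
-/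

open MeasureTheory ProbabilityTheory
open scoped ENNReal InnerProductSpace Matrix

section CauchySchwarz

variable {Ω : Type*} [MeasurableSpace Ω] {P : Measure Ω} {f g : Ω → ℝ}

lemma MeasureTheory.MemLp.integral_mul_eq_inner_toLp (hf : MemLp f 2 P) (hg : MemLp g 2 P) :
    ∫ x, f x * g x ∂P = ⟪hf.toLp f, hg.toLp g⟫_ℝ := by
  rw [L2.inner_def]
  refine integral_congr_ae ?_
  filter_upwards [hf.coeFn_toLp, hg.coeFn_toLp] with x hfx hgx
  simp [hfx, hgx, mul_comm]

lemma sq_integral_mul_le (hf : MemLp f 2 P) (hg : MemLp g 2 P) :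
    (∫ x, f x * g x ∂P) ^ 2 ≤ (∫ x, f x ^ 2 ∂P) * ∫ x, g x ^ 2 ∂P := by
  simp_rw [sq, hf.integral_mul_eq_inner_toLp hg, hf.integral_mul_eq_inner_toLp hf,
    hg.integral_mul_eq_inner_toLp hg]
  exact real_inner_mul_inner_self_le _ _

lemma ProbabilityTheory.sq_covariance_le_variance_mul_variance [IsFiniteMeasure P]
    (hf : MemLp f 2 P) (hg : MemLp g 2 P) : cov[f, g; P] ^ 2 ≤ Var[f; P] * Var[g; P] := by
  rw [covariance, variance_eq_integral hf.aestronglyMeasurable.aemeasurable,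
    variance_eq_integral hg.aestronglyMeasurable.aemeasurable]
  exact sq_integral_mul_le (hf.sub (memLp_const _)) (hg.sub (memLp_const _))

end CauchySchwarz

section PiWithDensity

variable {ι : Type*} [Fintype ι]

lemma lintegral_fintype_prod_eq_prod {E : ι → Type*} [∀ i, MeasurableSpace (E i)]
    (μ : ∀ i, Measure (E i)) [∀ i, IsProbabilityMeasure (μ i)] {f : ∀ i, E i → ℝ≥0∞}
    (hf : ∀ i, Measurable (f i)) :
    ∫⁻ x, ∏ i, f i (x i) ∂Measure.pi μ = ∏ i, ∫⁻ y, f i y ∂μ i := by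
  rw [lintegral_prod_eq_prod_lintegral_of_indepFun _ _
    (iIndepFun_pi fun i => (hf i).aemeasurable) fun i => (hf i).comp (measurable_pi_apply i)]
  exact Finset.prod_congr rfl fun i _ => (measurePreserving_eval μ i).lintegral_comp (hf i)

lemma MeasureTheory.Measure.pi_withDensity {E : ι → Type*} [∀ i, MeasurableSpace (E i)]
    (μ : ∀ i, Measure (E i)) [∀ i, IsProbabilityMeasure (μ i)] {g : ∀ i, E i → ℝ≥0∞}
    (hg : ∀ i, Measurable (g i)) [∀ i, SigmaFinite ((μ i).withDensity (g i))] :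
    Measure.pi (fun i => (μ i).withDensity (g i))
      = (Measure.pi μ).withDensity fun x => ∏ i, g i (x i) := by
  refine Measure.pi_eq fun s hs => ?_
  have hbox : (Set.univ.pi s).indicator (fun x => ∏ i, g i (x i))
      = fun x => ∏ i, (s i).indicator (g i) (x i) := by
    ext x
    classical
    simp only [Set.indicator_apply, Finset.prod_ite_zero, Set.mem_univ_pi, Finset.mem_univ,
      true_implies]
  rw [withDensity_apply _ (MeasurableSet.univ_pi hs), ← lintegral_indicator
    (MeasurableSet.univ_pi hs), hbox,
    lintegral_fintype_prod_eq_prod μ fun i => (hg i).indicator (hs i)]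
  exact Finset.prod_congr rfl fun i _ => by
    rw [withDensity_apply _ (hs i), lintegral_indicator (hs i)]

end PiWithDensity

section LikelihoodRatio

variable {X ι : Type*} [MeasurableSpace X] [Fintype ι] {μ ν : Measure X}

noncomputable def likelihoodRatio (μ ν : Measure X) (x : ι → X) : ℝ :=
  ∏ i, (ν.rnDeriv μ (x i)).toReal

lemma measurable_prod_rnDeriv : Measurable fun x : ι → X => ∏ i, ν.rnDeriv μ (x i) :=
  Finset.measurable_prod _ fun i _ => (Measure.measurable_rnDeriv ν μ).comp (measurable_pi_apply i)

lemma ae_prod_rnDeriv_lt_top [SigmaFinite μ] [SigmaFinite ν] :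
    ∀ᵐ x ∂Measure.pi (fun _ : ι => μ), ∏ i, ν.rnDeriv μ (x i) < ∞ := by
  filter_upwards [ae_all_iff.2 fun i => (Measure.quasiMeasurePreserving_eval (fun _ => μ) i).ae
    (Measure.rnDeriv_lt_top ν μ)] with x hx
  exact ENNReal.prod_lt_top fun i _ => hx i

lemma MeasureTheory.Measure.pi_eq_withDensity_prod_rnDeriv [IsProbabilityMeasure μ]
    [IsProbabilityMeasure ν] (hac : ν ≪ μ) :
    Measure.pi (fun _ : ι => ν)
      = (Measure.pi fun _ => μ).withDensity fun x => ∏ i, ν.rnDeriv μ (x i) := by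
  have : SigmaFinite (μ.withDensity (ν.rnDeriv μ)) := by
    rw [Measure.withDensity_rnDeriv_eq ν μ hac]
    infer_instance
  conv_lhs => rw [← Measure.withDensity_rnDeriv_eq ν μ hac]
  exact Measure.pi_withDensity _ fun _ => Measure.measurable_rnDeriv ν μ

lemma toReal_prod_rnDeriv_smul_eq_likelihoodRatio_mul (g : (ι → X) → ℝ) :
    (fun x => (∏ i, ν.rnDeriv μ (x i)).toReal • g x) = fun x => likelihoodRatio μ ν x * g x := by
  simp [likelihoodRatio, ENNReal.toReal_prod]

lemma integral_pi_eq_integral_likelihoodRatio_mul [IsProbabilityMeasure μ]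
    [IsProbabilityMeasure ν] (hac : ν ≪ μ) (g : (ι → X) → ℝ) :
    ∫ x, g x ∂Measure.pi (fun _ => ν)
      = ∫ x, likelihoodRatio μ ν x * g x ∂Measure.pi fun _ => μ := by
  rw [Measure.pi_eq_withDensity_prod_rnDeriv hac, integral_withDensity_eq_integral_toReal_smul
    measurable_prod_rnDeriv ae_prod_rnDeriv_lt_top,
    toReal_prod_rnDeriv_smul_eq_likelihoodRatio_mul]

lemma integral_likelihoodRatio [IsProbabilityMeasure μ] [IsProbabilityMeasure ν] (hac : ν ≪ μ) :
    ∫ x, likelihoodRatio μ ν x ∂Measure.pi (fun _ : ι => μ) = 1 := by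
  simpa using (integral_pi_eq_integral_likelihoodRatio_mul (ι := ι) hac fun _ => 1).symm

lemma likelihoodRatio_sq (x : ι → X) :
    likelihoodRatio μ ν x ^ 2 = ∏ i, (ν.rnDeriv μ (x i)).toReal ^ 2 :=
  (Finset.prod_pow _ _ _).symm

lemma memLp_likelihoodRatio [SigmaFinite μ] (hν : MemLp (fun y => (ν.rnDeriv μ y).toReal) 2 μ) :
    MemLp (likelihoodRatio μ ν) 2 (Measure.pi fun _ : ι => μ) := by
  refine (memLp_two_iff_integrable_sq ?_).2 ?_
  · exact (Finset.measurable_prod _ fun i _ => ((Measure.measurable_rnDeriv ν μ).comp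
      (measurable_pi_apply i)).ennreal_toReal).aestronglyMeasurable
  · simp_rw [likelihoodRatio_sq]
    exact Integrable.fintype_prod fun _ => hν.integrable_sq

lemma variance_likelihoodRatio [IsProbabilityMeasure μ] [IsProbabilityMeasure ν] (hac : ν ≪ μ)
    (hν : MemLp (fun y => (ν.rnDeriv μ y).toReal) 2 μ) :
    Var[likelihoodRatio μ ν; Measure.pi fun _ : ι => μ]
      = (∫ y, (1 - (ν.rnDeriv μ y).toReal) ^ 2 ∂μ + 1) ^ Fintype.card ι - 1 := by
  have hsecond : ∫ y, (ν.rnDeriv μ y).toReal ^ 2 ∂μ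
      = ∫ y, (1 - (ν.rnDeriv μ y).toReal) ^ 2 ∂μ + 1 := by
    have h := variance_eq_sub hν
    rw [variance_eq_integral hν.aestronglyMeasurable.aemeasurable,
      Measure.integral_toReal_rnDeriv hac, probReal_univ] at h
    simp only [sub_sq_comm _ (1 : ℝ), Pi.pow_apply, one_pow] at h ⊢
    linarith
  rw [variance_eq_sub (memLp_likelihoodRatio hν), integral_likelihoodRatio hac]
  simp_rw [Pi.pow_apply, likelihoodRatio_sq]
  rw [integral_fintype_prod_eq_pow (μ := μ) fun y => (ν.rnDeriv μ y).toReal ^ 2, hsecond, one_pow]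

lemma integral_pi_sub_integral_pi_eq_covariance [IsProbabilityMeasure μ]
    [IsProbabilityMeasure ν] (hac : ν ≪ μ) (hν : MemLp (fun y => (ν.rnDeriv μ y).toReal) 2 μ)
    {g : (ι → X) → ℝ} (hg : MemLp g 2 (Measure.pi fun _ => μ)) :
    ∫ x, g x ∂Measure.pi (fun _ => ν) - ∫ x, g x ∂Measure.pi (fun _ => μ)
      = cov[likelihoodRatio μ ν, g; Measure.pi fun _ => μ] := by
  rw [covariance_eq_sub (memLp_likelihoodRatio hν) hg, integral_likelihoodRatio hac, one_mul,
    integral_pi_eq_integral_likelihoodRatio_mul hac]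
  rfl

lemma integrable_pi_of_memLp [IsProbabilityMeasure μ] [IsProbabilityMeasure ν] (hac : ν ≪ μ)
    (hν : MemLp (fun y => (ν.rnDeriv μ y).toReal) 2 μ) {g : (ι → X) → ℝ}
    (hg : MemLp g 2 (Measure.pi fun _ => μ)) : Integrable g (Measure.pi fun _ => ν) := by
  rw [Measure.pi_eq_withDensity_prod_rnDeriv hac, integrable_withDensity_iff_integrable_smul'
    measurable_prod_rnDeriv ae_prod_rnDeriv_lt_top,
    toReal_prod_rnDeriv_smul_eq_likelihoodRatio_mul]
  exact (memLp_likelihoodRatio hν).integrable_mul hg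

theorem sq_integral_pi_sub_integral_pi_le [IsProbabilityMeasure μ] [IsProbabilityMeasure ν]
    (hac : ν ≪ μ) (hν : MemLp (fun y => (ν.rnDeriv μ y).toReal) 2 μ)
    {g : (ι → X) → ℝ} (hg : MemLp g 2 (Measure.pi fun _ => μ)) :
    (∫ x, g x ∂Measure.pi (fun _ => ν) - ∫ x, g x ∂Measure.pi (fun _ => μ)) ^ 2
      ≤ Var[g; Measure.pi fun _ => μ]
        * ((∫ y, (1 - (ν.rnDeriv μ y).toReal) ^ 2 ∂μ + 1) ^ Fintype.card ι - 1) := by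
  rw [integral_pi_sub_integral_pi_eq_covariance hac hν hg, ← variance_likelihoodRatio hac hν,
    mul_comm]
  exact sq_covariance_le_variance_mul_variance (memLp_likelihoodRatio hν) hg

end LikelihoodRatio

section QuadraticForm

variable {m : Type*} [Fintype m]

lemma Matrix.posSemidef_sub_vecMulVec_div {M : Matrix m m ℝ} (hM : M.IsSymm) (v : m → ℝ)
    (D : ℝ) (h : ∀ a, (a ⬝ᵥ v) ^ 2 / D ≤ a ⬝ᵥ M *ᵥ a) :
    (Matrix.of fun i j => M i j - v i * v j / D).PosSemidef := by
  rw [Matrix.posSemidef_iff_dotProduct_mulVec]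
  refine ⟨?_, fun a => ?_⟩
  · ext i j
    simp [hM.apply i j, mul_comm]
  · have hquad : a ⬝ᵥ (Matrix.of fun i j => M i j - v i * v j / D) *ᵥ a
        = a ⬝ᵥ M *ᵥ a - (a ⬝ᵥ v) ^ 2 / D := by
      simp only [dotProduct, Matrix.mulVec, Matrix.of_apply, sub_mul, mul_sub,
        Finset.sum_sub_distrib, sq, Finset.sum_mul, Finset.mul_sum, Finset.sum_div]
      congr 1
      exact Finset.sum_congr rfl fun i _ => Finset.sum_congr rfl fun j _ => by ring
    simpa [hquad] using h a

variable {Ω : Type*} [MeasurableSpace Ω] {P : Measure Ω} {Y : Ω → m → ℝ}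

lemma integral_dotProduct (hY : ∀ i, Integrable (fun x => Y x i) P) (a : m → ℝ) :
    ∫ x, a ⬝ᵥ Y x ∂P = a ⬝ᵥ fun i => ∫ x, Y x i ∂P := by
  simp only [dotProduct]
  rw [integral_finsetSum _ fun i _ => (hY i).const_mul (a i)]
  simp_rw [integral_const_mul]

lemma dotProduct_mulVec_integral_mul (hY : ∀ i, MemLp (fun x => Y x i) 2 P) (a : m → ℝ) :
    a ⬝ᵥ (Matrix.of fun i j => ∫ x, Y x i * Y x j ∂P) *ᵥ a = ∫ x, (a ⬝ᵥ Y x) ^ 2 ∂P := by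
  have hint : ∀ i j, Integrable (fun x => a j * Y x j * (a i * Y x i)) P := fun i j =>
    ((hY j).const_mul (a j)).integrable_mul ((hY i).const_mul (a i))
  simp only [dotProduct, Matrix.mulVec, Matrix.of_apply, sq, Finset.sum_mul, Finset.mul_sum]
  rw [integral_finsetSum _ fun i _ => integrable_finsetSum _ fun j _ => hint i j]
  refine Finset.sum_congr rfl fun i _ => ?_
  rw [integral_finsetSum _ fun j _ => hint i j]
  refine Finset.sum_congr rfl fun j _ => ?_
  rw [← integral_mul_const, ← integral_const_mul]
  exact integral_congr_ae (ae_of_all _ fun x => by ring)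

end QuadraticForm

theorem variance_matrix_lower_bound_general {X : Type*} [MeasurableSpace X] (μ ν : Measure X)
    [IsProbabilityMeasure μ] [IsProbabilityMeasure ν]
    (hac : ν ≪ μ) (hL2 : MemLp (fun x => (ν.rnDeriv μ x).toReal) 2 μ)
    (d : ℝ) (hd : d = ∫ x, (1 - (ν.rnDeriv μ x).toReal) ^ 2 ∂μ)
    (n q : ℕ) (T : (Fin n → X) → Fin q → ℝ)
    (hT : ∀ i, MemLp (fun x => T x i) 2 (Measure.pi fun _ : Fin n => μ))
    (ψμ ψν : Fin q → ℝ)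
    (hμ : ∀ i, ∫ x, T x i ∂(Measure.pi fun _ : Fin n => μ) = ψμ i)
    (hν : ∀ i, ∫ x, T x i ∂(Measure.pi fun _ : Fin n => ν) = ψν i) :
    (Matrix.of (fun i j =>
        (∫ x, (T x i - ψμ i) * (T x j - ψμ j) ∂(Measure.pi fun _ : Fin n => μ))
          - (ψμ i - ψν i) * (ψμ j - ψν j) / ((d + 1) ^ n - 1))).PosSemidef := by
  set πμ := Measure.pi fun _ : Fin n => μ
  set M : Matrix (Fin q) (Fin q) ℝ :=
    Matrix.of fun i j => ∫ x, (T x i - ψμ i) * (T x j - ψμ j) ∂πμ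
  refine Matrix.posSemidef_sub_vecMulVec_div (M := M)
    (Matrix.IsSymm.ext fun i j => by simp only [M, Matrix.of_apply, mul_comm])
    (fun i => ψμ i - ψν i) _ fun a => ?_
  have hg : MemLp (fun x => a ⬝ᵥ T x) 2 πμ := memLp_finsetSum _ fun i _ => (hT i).const_mul (a i)
  have hgμ : ∫ x, a ⬝ᵥ T x ∂πμ = a ⬝ᵥ ψμ := by
    rw [integral_dotProduct fun i => (hT i).integrable one_le_two, funext hμ]
  have hgν : ∫ x, a ⬝ᵥ T x ∂Measure.pi (fun _ => ν) = a ⬝ᵥ ψν := by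
    rw [integral_dotProduct fun i => integrable_pi_of_memLp hac hL2 (hT i), funext hν]
  have hvar : a ⬝ᵥ M *ᵥ a = Var[fun x => a ⬝ᵥ T x; πμ] := by
    rw [variance_eq_integral hg.aestronglyMeasurable.aemeasurable, hgμ]
    simp_rw [← dotProduct_sub]
    exact dotProduct_mulVec_integral_mul (Y := fun x i => T x i - ψμ i)
      (fun i => (hT i).sub (memLp_const (ψμ i))) a
  have hCR := sq_integral_pi_sub_integral_pi_le hac hL2 hg
  rw [hgν, hgμ, ← hvar, ← hd, Fintype.card_fin, sub_sq_comm, ← dotProduct_sub] at hCR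
  have hd0 : 0 ≤ d := hd ▸ integral_nonneg fun x => sq_nonneg _
  exact div_le_of_le_mul₀ (sub_nonneg.2 (one_le_pow₀ (by linarith)))
    (hvar ▸ variance_nonneg _ _) hCR

/-- Multivariate variance lower bound: for an `ℝ^q`-valued unbiased estimator `T` from `n`
i.i.d. observations, the covariance matrix dominates
`(ψ(μ) - ψ(ν))(ψ(μ) - ψ(ν))ᵗ / ((d(μ,ν) + 1)^n - 1)` in the positive semi-definite order,
where `d(μ,ν) = ∫ (1 - dν/dμ)² dμ` with `0 < d(μ,ν) < ∞`. -/
theorem variance_matrix_lower_bound {X : Type*} [MeasurableSpace X] (μ ν : Measure X)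
    [IsProbabilityMeasure μ] [IsProbabilityMeasure ν]
    (hac : ν ≪ μ) (hL2 : MemLp (fun x => (ν.rnDeriv μ x).toReal) 2 μ)
    (d : ℝ) (hd : d = ∫ x, (1 - (ν.rnDeriv μ x).toReal) ^ 2 ∂μ) (hdpos : 0 < d)
    (n q : ℕ) (T : (Fin n → X) → Fin q → ℝ)
    (hT : ∀ i, MemLp (fun x => T x i) 2 (Measure.pi fun _ : Fin n => μ))
    (ψμ ψν : Fin q → ℝ)
    (hμ : ∀ i, ∫ x, T x i ∂(Measure.pi fun _ : Fin n => μ) = ψμ i)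
    (hν : ∀ i, ∫ x, T x i ∂(Measure.pi fun _ : Fin n => ν) = ψν i) :
    (Matrix.of (fun i j =>
        (∫ x, (T x i - ψμ i) * (T x j - ψμ j) ∂(Measure.pi fun _ : Fin n => μ))
          - (ψμ i - ψν i) * (ψμ j - ψν j) / ((d + 1) ^ n - 1))).PosSemidef :=
  variance_matrix_lower_bound_general μ ν hac hL2 d hd n q T hT ψμ ψν hμ hν
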